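/- If x has alternating Cantor representation with elements (d_n) and digits (ε_n), and φ̂^m(x) = φ̂^{m+c}(x) for some m ≥ 0 and c ≥ 1, then x = (g_m + (−1)^{c+1} d_{m+1}⋯d_{m+c} · g_{m+c}) / (1 + (−1)^{c+1} d_{m+1}⋯d_{m+c}), where g_k = ∑_{i=1}^k (−1)^i ε_i/(d_1⋯d_i); in particular x is rational. -/

import Mathlib

open Finset

/-- Product d_1 d_2 ... d_n. -/
noncomputable def P (d : ℕ → ℕ) (n : ℕ) : ℝ := ∏ i ∈ Finset.Icc 1 n, (d i : ℝ)

/-- The alternating Cantor series sum ∑_{n≥1} (-1)^n ε_n/(d_1...d_n). -/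
noncomputable def negaSum (d ε : ℕ → ℕ) : ℝ :=
  ∑' n : ℕ, (-1 : ℝ) ^ (n + 1) * (ε (n + 1) : ℝ) / P d (n + 1)

/-- a₀ = ∑_{n≥1} (-1)^{n+1}/(d_1...d_n). -/
noncomputable def a0 (d : ℕ → ℕ) : ℝ := ∑' n : ℕ, (-1 : ℝ) ^ n / P d (n + 1)

/-- k-fold shift of the representation: ∑_{j≥1} (-1)^j ε_{k+j}/(d_{k+1}...d_{k+j}). -/
noncomputable def shift (d ε : ℕ → ℕ) (k : ℕ) : ℝ :=
  ∑' j : ℕ, (-1 : ℝ) ^ (j + 1) * (ε (k + j + 1) : ℝ) / ∏ i ∈ Finset.Icc (k + 1) (k + j + 1), (d i : ℝ)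

/-- Partial sum g_k = ∑_{i=1}^k (-1)^i ε_i/(d_1...d_i). -/
noncomputable def g (d ε : ℕ → ℕ) (k : ℕ) : ℝ :=
  ∑ i ∈ Finset.Icc 1 k, (-1 : ℝ) ^ i * (ε i : ℝ) / P d i


/-! Splitting the series after `k` terms gives `x = g_k + (-1)^k / (d_1⋯d_k) · φ̂^k(x)`.
Writing this for `k = m` and `k = m + c` and eliminating the common tail
`φ̂^m(x) = φ̂^{m+c}(x)` leaves a linear equation for `x` with rational coefficients, whose
leading coefficient `1 ± d_{m+1}⋯d_{m+c}` is nonzero because that block product is at least `2`. -/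

lemma P_eq_mul_prod_Icc (d : ℕ → ℕ) {k n : ℕ} (h : k ≤ n) :
    P d n = P d k * ∏ i ∈ Icc (k + 1) n, (d i : ℝ) := by
  have hIcc (j : ℕ) : Icc 1 j = Ioc 0 j := Icc_add_one_left_eq_Ioc 0 j
  rw [P, P, hIcc, hIcc, Icc_add_one_left_eq_Ioc, prod_Ioc_consecutive _ (Nat.zero_le k) h]

lemma P_succ (d : ℕ → ℕ) (n : ℕ) : P d (n + 1) = P d n * d (n + 1) :=
  prod_Icc_succ_top (by omega) _

lemma two_pow_le_prod_Icc {d : ℕ → ℕ} (hd : ∀ n, 1 ≤ n → 2 ≤ d n) (k n : ℕ) :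
    (2 : ℝ) ^ n ≤ ∏ i ∈ Icc (k + 1) (k + n), (d i : ℝ) := by
  calc (2 : ℝ) ^ n = ∏ _i ∈ Icc (k + 1) (k + n), (2 : ℝ) := by
        rw [prod_const, Nat.card_Icc, show k + n + 1 - (k + 1) = n by omega]
    _ ≤ ∏ i ∈ Icc (k + 1) (k + n), (d i : ℝ) :=
        prod_le_prod (fun _ _ => zero_le_two) fun i hi => by
          exact_mod_cast hd i (by linarith [(mem_Icc.mp hi).1])

lemma two_pow_le_P {d : ℕ → ℕ} (hd : ∀ n, 1 ≤ n → 2 ≤ d n) (n : ℕ) :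
    (2 : ℝ) ^ n ≤ P d n := by
  simpa [P] using two_pow_le_prod_Icc hd 0 n

lemma P_pos {d : ℕ → ℕ} (hd : ∀ n, 1 ≤ n → 2 ≤ d n) (n : ℕ) : 0 < P d n :=
  lt_of_lt_of_le (by positivity) (two_pow_le_P hd n)

lemma summable_negaSum {d ε : ℕ → ℕ} (hd : ∀ n, 1 ≤ n → 2 ≤ d n)
    (hε : ∀ n, 1 ≤ n → ε n ≤ d n - 1) :
    Summable fun n : ℕ => (-1 : ℝ) ^ (n + 1) * (ε (n + 1) : ℝ) / P d (n + 1) := by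
  refine Summable.of_norm_bounded summable_geometric_two fun n => ?_
  have hPn := P_pos hd n
  have hdn : (0 : ℝ) < d (n + 1) := Nat.cast_pos.mpr (two_pos.trans_le (hd (n + 1) (by omega)))
  have hεd : (ε (n + 1) : ℝ) ≤ d (n + 1) := by
    exact_mod_cast (hε (n + 1) (by omega)).trans (Nat.sub_le _ _)
  calc ‖(-1 : ℝ) ^ (n + 1) * (ε (n + 1) : ℝ) / P d (n + 1)‖
        = ε (n + 1) / (P d n * d (n + 1)) := by
        rw [P_succ, norm_div, norm_mul, norm_pow, norm_neg, norm_one, one_pow, one_mul,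
          Real.norm_natCast, Real.norm_of_nonneg (by positivity)]
    _ ≤ d (n + 1) / (P d n * d (n + 1)) := by gcongr
    _ = 1 / P d n := by field_simp
    _ ≤ 1 / 2 ^ n := by gcongr; exact two_pow_le_P hd n
    _ = (1 / 2) ^ n := by rw [one_div_pow]

lemma g_eq_sum_range (d ε : ℕ → ℕ) (k : ℕ) :
    g d ε k = ∑ i ∈ range k, (-1 : ℝ) ^ (i + 1) * (ε (i + 1) : ℝ) / P d (i + 1) := by
  induction k with
  | zero => simp [g]
  | succ n ih => rw [sum_range_succ, ← ih, g, g, sum_Icc_succ_top (by omega)]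

lemma negaSum_eq_g_add_shift {d ε : ℕ → ℕ} (hd : ∀ n, 1 ≤ n → 2 ≤ d n)
    (hε : ∀ n, 1 ≤ n → ε n ≤ d n - 1) (k : ℕ) :
    negaSum d ε = g d ε k + (-1 : ℝ) ^ k / P d k * shift d ε k := by
  rw [negaSum, ← (summable_negaSum hd hε).sum_add_tsum_nat_add k, g_eq_sum_range, shift,
    ← tsum_mul_left]
  congr 1
  refine tsum_congr fun j => ?_
  rw [show j + k + 1 = k + j + 1 by omega, P_eq_mul_prod_Icc d (by omega : k ≤ k + j + 1),
    show k + j + 1 = k + (j + 1) by omega, pow_add]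
  ring

lemma negaSum_eq_of_shift_eq {d ε : ℕ → ℕ} {m c : ℕ} (hc : 1 ≤ c)
    (hd : ∀ n, 1 ≤ n → 2 ≤ d n) (hε : ∀ n, 1 ≤ n → ε n ≤ d n - 1)
    (hper : shift d ε m = shift d ε (m + c)) :
    negaSum d ε =
      (g d ε m + (-1 : ℝ) ^ (c + 1) * (∏ i ∈ Icc (m + 1) (m + c), (d i : ℝ)) * g d ε (m + c)) /
        (1 + (-1 : ℝ) ^ (c + 1) * ∏ i ∈ Icc (m + 1) (m + c), (d i : ℝ)) := by
  have hm := negaSum_eq_g_add_shift hd hε m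
  have hmc := negaSum_eq_g_add_shift hd hε (m + c)
  rw [← hper, P_eq_mul_prod_Icc d (Nat.le_add_right m c), pow_add] at hmc
  set Q := ∏ i ∈ Icc (m + 1) (m + c), (d i : ℝ)
  have hQ : 2 ≤ Q :=
    calc (2 : ℝ) ≤ 2 ^ c := le_self_pow₀ one_le_two (by omega)
      _ ≤ Q := two_pow_le_prod_Icc hd m c
  have hPm : P d m ≠ 0 := (P_pos hd m).ne'
  have hQ0 : Q ≠ 0 := by positivity
  have key : (negaSum d ε - g d ε (m + c)) * Q = (-1 : ℝ) ^ c * (negaSum d ε - g d ε m) :=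
    calc (negaSum d ε - g d ε (m + c)) * Q
          = (-1 : ℝ) ^ c * ((-1) ^ m / P d m * shift d ε m) := by
          rw [hmc]; field_simp; ring
      _ = (-1 : ℝ) ^ c * (negaSum d ε - g d ε m) := by rw [hm]; ring
  have hden : 1 + (-1 : ℝ) ^ (c + 1) * Q ≠ 0 := by
    rcases neg_one_pow_eq_or ℝ (c + 1) with h | h <;> rw [h] <;> linarith
  have hsq : ((-1 : ℝ) ^ c) ^ 2 = 1 := by rw [← pow_mul, mul_comm, pow_mul, neg_one_sq, one_pow]
  rw [eq_div_iff hden, pow_succ]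
  linear_combination (-(-1 : ℝ) ^ c) * key + (g d ε m - negaSum d ε) * hsq

lemma exists_ratCast_eq_g (d ε : ℕ → ℕ) (k : ℕ) : ∃ q : ℚ, (q : ℝ) = g d ε k :=
  ⟨∑ i ∈ Icc 1 k, (-1 : ℚ) ^ i * ε i / ∏ j ∈ Icc 1 i, (d j : ℚ), by
    push_cast [g, P]; rfl⟩

theorem eventually_periodic_shift_rational (d ε : ℕ → ℕ) (m c : ℕ)
    (hc : 1 ≤ c) (hd : ∀ n, 1 ≤ n → 2 ≤ d n) (hε : ∀ n, 1 ≤ n → ε n ≤ d n - 1)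
    (hper : shift d ε m = shift d ε (m + c)) :
    negaSum d ε =
      (g d ε m + (-1 : ℝ) ^ (c + 1) * (∏ i ∈ Finset.Icc (m + 1) (m + c), (d i : ℝ)) * g d ε (m + c)) /
        (1 + (-1 : ℝ) ^ (c + 1) * ∏ i ∈ Finset.Icc (m + 1) (m + c), (d i : ℝ)) ∧
    ∃ q : ℚ, negaSum d ε = (q : ℝ) := by
  have hx := negaSum_eq_of_shift_eq hc hd hε hper
  refine ⟨hx, ?_⟩
  obtain ⟨a, ha⟩ := exists_ratCast_eq_g d ε m
  obtain ⟨b, hb⟩ := exists_ratCast_eq_g d ε (m + c)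
  set Q := ∏ i ∈ Icc (m + 1) (m + c), (d i : ℚ)
  refine ⟨(a + (-1) ^ (c + 1) * Q * b) / (1 + (-1) ^ (c + 1) * Q), ?_⟩
  rw [hx, ← ha, ← hb]
  push_cast [Q]
  rfl
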